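/- Suppose the multistage momentum weights satisfy 1/2 ≤ β_1 ≤ β_2 ≤ … ≤ β_n < 1, β_i^{2 T_i} ≤ 1/2 for every stage i = 1, …, n, and (1−β_1)/β_1 ≤ 12 (1−β_n)/√(β_n + β_n²). Then for every 1 ≤ k ≤ T_1 + … + T_n: (1/(1−β(k))) E[‖m^{k−1} − ∑_{i=1}^{k−1} b_{k−1,i} g^i‖²] ≤ 24 (β_1/√(β_n + β_n²)) σ². -/

import Mathlib

/-!
The shifted momentum `s^K = m^K - ∑ b_{K,i} g^i` satisfies
`s^{K+1} = β(K+1) s^K + (1 - β(K+1)) (g̃^{K+1} - g^{K+1})`. Both `s^K` and `x^{K+1}` are functions of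
`ζ^1, …, ζ^K`, which are independent of `ζ^{K+1}`; freezing them (Fubini on the product law) and
using that the noise is centred kills the cross term, so
`E‖s^{K+1}‖² ≤ β² E‖s^K‖² + (1 - β)² σ²`. Since `(1 - β)² ≤ (1 - β₁)(1 - β²)` for `β₁ ≤ β < 1`,
induction gives `E‖s^K‖² ≤ (1 - β₁) σ²`, and the ratio hypothesis turns
`(1 - β₁) / (1 - βₙ)` into the constant `24 β₁ / √(βₙ + βₙ²)`.
-/

open MeasureTheory ProbabilityTheory

section Pythagoras

variable {β E : Type*} [MeasurableSpace β] {ν : Measure β} [IsProbabilityMeasure ν]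
  [NormedAddCommGroup E] [InnerProductSpace ℝ E] [CompleteSpace E]

theorem integral_norm_add_sq_of_integral_eq_zero (w : E) {f : β → E}
    (hf : AEStronglyMeasurable f ν) (hf0 : ∫ v, f v ∂ν = 0)
    (hint : Integrable (fun v => ‖w + f v‖ ^ 2) ν) :
    ∫ v, ‖w + f v‖ ^ 2 ∂ν = ‖w‖ ^ 2 + ∫ v, ‖f v‖ ^ 2 ∂ν := by
  have hwf : MemLp (fun v => w + f v) 2 ν :=
    (memLp_two_iff_integrable_sq_norm (hf.const_add w)).mpr hint
  have hf2 : MemLp f 2 ν := by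
    convert hwf.sub (memLp_const w) using 1
    ext v
    simp
  have hf1 : Integrable f ν := hf2.integrable one_le_two
  have hfsq : Integrable (fun v => ‖f v‖ ^ 2) ν := (memLp_two_iff_integrable_sq_norm hf).mp hf2
  have hinner : Integrable (fun v => 2 * inner ℝ w (f v)) ν := (hf1.const_inner w).const_mul 2
  have hlin : Integrable (fun v => ‖w‖ ^ 2 + 2 * inner ℝ w (f v)) ν :=
    (integrable_const _).add hinner
  simp_rw [norm_add_sq_real]
  rw [integral_add hlin hfsq, integral_add (integrable_const _) hinner,
    integral_const_mul, integral_inner hf1, hf0]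
  simp

end Pythagoras

section Independent

variable {α β E : Type*} [MeasurableSpace α] [MeasurableSpace β]
  [NormedAddCommGroup E] [InnerProductSpace ℝ E] [CompleteSpace E]
  {a : α → E} {e : α → β → E} {s : ℝ}

theorem integral_prod_norm_add_sq_le {μ : Measure α} {ν : Measure β}
    [IsProbabilityMeasure μ] [IsProbabilityMeasure ν]
    (ha : StronglyMeasurable a) (he : StronglyMeasurable (Function.uncurry e)) (hs : 0 ≤ s)
    (hmean : ∀ u, ∫ v, e u v ∂ν = 0) (hvar : ∀ u, ∫ v, ‖e u v‖ ^ 2 ∂ν ≤ s) :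
    ∫ p, ‖a p.1 + e p.1 p.2‖ ^ 2 ∂(μ.prod ν) ≤ ∫ u, ‖a u‖ ^ 2 ∂μ + s := by
  -- Integrability of `e` is not assumed: it is recovered on almost every slice from that of
  -- `‖a + e‖²`, and the Pythagoras identity then makes `‖a‖²` integrable.
  by_cases hint : Integrable (fun p : α × β => ‖a p.1 + e p.1 p.2‖ ^ 2) (μ.prod ν)
  swap
  · rw [integral_undef hint]
    exact add_nonneg (integral_nonneg fun _ => sq_nonneg _) hs
  have hslice : ∀ u, Integrable (fun v => ‖a u + e u v‖ ^ 2) ν →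
      ∫ v, ‖a u + e u v‖ ^ 2 ∂ν = ‖a u‖ ^ 2 + ∫ v, ‖e u v‖ ^ 2 ∂ν := fun u hu =>
    integral_norm_add_sq_of_integral_eq_zero (a u)
      (he.comp_measurable measurable_prodMk_left).aestronglyMeasurable (hmean u) hu
  have hslices := hint.integral_prod_left
  have ha2 : Integrable (fun u => ‖a u‖ ^ 2) μ := by
    refine hslices.mono' (ha.norm.pow 2).aestronglyMeasurable ?_
    filter_upwards [hint.prod_right_ae] with u hu
    rw [Real.norm_of_nonneg (sq_nonneg _), hslice u hu]
    exact le_add_of_nonneg_right (integral_nonneg fun _ => sq_nonneg _)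
  calc ∫ p, ‖a p.1 + e p.1 p.2‖ ^ 2 ∂(μ.prod ν)
      = ∫ u, ∫ v, ‖a u + e u v‖ ^ 2 ∂ν ∂μ := integral_prod _ hint
    _ ≤ ∫ u, (‖a u‖ ^ 2 + s) ∂μ := by
        refine integral_mono_ae hslices (ha2.add (integrable_const s)) ?_
        filter_upwards [hint.prod_right_ae] with u hu
        rw [hslice u hu]
        linarith [hvar u]
    _ = ∫ u, ‖a u‖ ^ 2 ∂μ + s := by
        rw [integral_add ha2 (integrable_const s)]
        simp

theorem integral_norm_add_sq_le_of_indepFun {Ω : Type*} [MeasurableSpace Ω] {P : Measure Ω}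
    [IsProbabilityMeasure P] {U : Ω → α} {V : Ω → β} (hU : Measurable U) (hV : Measurable V)
    (hUV : IndepFun U V P)
    (ha : StronglyMeasurable a) (he : StronglyMeasurable (Function.uncurry e)) (hs : 0 ≤ s)
    (hmean : ∀ u, ∫ ω, e u (V ω) ∂P = 0) (hvar : ∀ u, ∫ ω, ‖e u (V ω)‖ ^ 2 ∂P ≤ s) :
    ∫ ω, ‖a (U ω) + e (U ω) (V ω)‖ ^ 2 ∂P ≤ ∫ ω, ‖a (U ω)‖ ^ 2 ∂P + s := by
  have : IsProbabilityMeasure (P.map U) := Measure.isProbabilityMeasure_map hU.aemeasurable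
  have : IsProbabilityMeasure (P.map V) := Measure.isProbabilityMeasure_map hV.aemeasurable
  have hmap : P.map (fun ω => (U ω, V ω)) = (P.map U).prod (P.map V) :=
    (indepFun_iff_map_prod_eq_prod_map_map hU.aemeasurable hV.aemeasurable).mp hUV
  have hslice (u : α) : StronglyMeasurable (e u) := he.comp_measurable measurable_prodMk_left
  have hprod := integral_prod_norm_add_sq_le (μ := P.map U) ha he hs
    (fun u => by rw [integral_map hV.aemeasurable (hslice u).aestronglyMeasurable]; exact hmean u)
    (fun u => by
      rw [integral_map (f := fun v => ‖e u v‖ ^ 2) hV.aemeasurable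
        ((hslice u).norm.pow 2).aestronglyMeasurable]
      exact hvar u)
  rw [← hmap, integral_map (hU.prodMk hV).aemeasurable, integral_map hU.aemeasurable] at hprod
  · exact hprod
  · exact (ha.norm.pow 2).aestronglyMeasurable
  · exact ((ha.comp_measurable measurable_fst).add he).norm.pow 2 |>.aestronglyMeasurable

end Independent

theorem integral_sub_eq_zero_of_integral_eq {Ω E : Type*} [MeasurableSpace Ω] {P : Measure Ω}
    [IsProbabilityMeasure P] [NormedAddCommGroup E] [NormedSpace ℝ E] [CompleteSpace E]
    {X : Ω → E} {c : E}
    (h : ∫ ω, X ω ∂P = c) : ∫ ω, (X ω - c) ∂P = 0 := by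
  by_cases hX : Integrable X P
  · rw [integral_sub hX (integrable_const c), h, integral_const]
    simp
  · refine integral_undef fun hXc => hX ?_
    exact (hXc.add (integrable_const c)).congr (ae_of_all _ fun ω => sub_add_cancel (X ω) c)

open Finset in
theorem exists_stage_of_le_sum (T : ℕ → ℕ) {n k : ℕ} (hk : 1 ≤ k)
    (hkn : k ≤ ∑ j ∈ Icc 1 n, T j) :
    ∃ l ∈ Icc 1 n, ∑ j ∈ Icc 1 (l - 1), T j < k ∧ k ≤ ∑ j ∈ Icc 1 l, T j := by
  induction n with
  | zero => simp at hkn; omega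
  | succ n ih =>
    by_cases hprev : k ≤ ∑ j ∈ Icc 1 n, T j
    · obtain ⟨l, hl, hlk⟩ := ih hprev
      exact ⟨l, Icc_subset_Icc_right n.le_succ hl, hlk⟩
    · exact ⟨n + 1, by simp, by simpa using hprev, hkn⟩

theorem le_one_sub_mul_of_le_sq_mul_add {V b : ℕ → ℝ} {β s : ℝ} {N : ℕ}
    (hβ : 0 ≤ β) (hβ1 : β ≤ 1) (hs : 0 ≤ s) (hV0 : V 0 = 0)
    (hb : ∀ K < N, β ≤ b (K + 1) ∧ b (K + 1) < 1)
    (hV : ∀ K < N, V (K + 1) ≤ b (K + 1) ^ 2 * V K + (1 - b (K + 1)) ^ 2 * s) :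
    ∀ K ≤ N, V K ≤ (1 - β) * s := by
  intro K
  induction K with
  | zero => intro _; rw [hV0]; exact mul_nonneg (by linarith) hs
  | succ K ih =>
    intro hK
    obtain ⟨hβb, hb1⟩ := hb K hK
    have hweight : (1 - b (K + 1)) ^ 2 ≤ (1 - β) * (1 - b (K + 1) ^ 2) := by
      nlinarith [mul_nonneg (sub_nonneg.mpr hb1.le) (sub_nonneg.mpr hβb),
        mul_nonneg (mul_nonneg (sub_nonneg.mpr hb1.le) hβ) (hβ.trans hβb)]
    calc V (K + 1) ≤ b (K + 1) ^ 2 * V K + (1 - b (K + 1)) ^ 2 * s := hV K hK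
      _ ≤ b (K + 1) ^ 2 * ((1 - β) * s) + (1 - β) * (1 - b (K + 1) ^ 2) * s := by
        gcongr
        exact ih (Nat.le_of_succ_le hK)
      _ = (1 - β) * s := by ring

theorem one_div_one_sub_mul_le {β₁ βₙ b q V s : ℝ} (hβ₁ : 0 < β₁) (hβ₁ₙ : β₁ ≤ βₙ)
    (hβₙ : βₙ < 1) (hb : b ≤ βₙ) (hq : 0 < q) (hs : 0 ≤ s) (hV : V ≤ (1 - β₁) * s)
    (hratio : (1 - β₁) / β₁ ≤ 12 * (1 - βₙ) / q) :
    1 / (1 - b) * V ≤ 24 * (β₁ / q) * s := by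
  have hβₙ' : 0 < 1 - βₙ := sub_pos.mpr hβₙ
  have hratio' : (1 - β₁) / (1 - βₙ) ≤ 12 * (β₁ / q) := by
    rw [div_le_div_iff₀ hβ₁ hq] at hratio
    rw [div_le_iff₀ hβₙ', mul_div_assoc', div_mul_eq_mul_div, le_div_iff₀ hq]
    linarith
  calc 1 / (1 - b) * V ≤ 1 / (1 - b) * ((1 - β₁) * s) :=
        mul_le_mul_of_nonneg_left hV (one_div_nonneg.mpr (by linarith))
    _ ≤ 1 / (1 - βₙ) * ((1 - β₁) * s) :=
        mul_le_mul_of_nonneg_right (one_div_le_one_div_of_le hβₙ' (by linarith))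
          (mul_nonneg (by linarith) hs)
    _ = (1 - β₁) / (1 - βₙ) * s := by ring
    _ ≤ 12 * (β₁ / q) * s := by gcongr
    _ ≤ 24 * (β₁ / q) * s := by gcongr; norm_num

section Trajectory

open Finset

variable {E Z : Type*} [AddCommGroup E] [Module ℝ E]

/-- The weight `b_{K,i}` of `g^i` in the momentum `m^K`. -/
def momentumWeight (B : ℕ → ℝ) (K i : ℕ) : ℝ :=
  (1 - B i) * ∏ j ∈ Icc (i + 1) K, B j

theorem momentumWeight_self (B : ℕ → ℝ) (K : ℕ) : momentumWeight B K K = 1 - B K := by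
  simp [momentumWeight]

theorem momentumWeight_succ (B : ℕ → ℝ) {K i : ℕ} (hi : i ≤ K) :
    momentumWeight B (K + 1) i = B (K + 1) * momentumWeight B K i := by
  rw [momentumWeight, momentumWeight, prod_Icc_succ_top (by omega)]
  ring

theorem momentum_sub_weighted_sum_succ (B : ℕ → ℝ) (g : ℕ → E) (m v : E) (K : ℕ) :
    (B (K + 1) • m + (1 - B (K + 1)) • v) - ∑ i ∈ Icc 1 (K + 1), momentumWeight B (K + 1) i • g i
      = B (K + 1) • (m - ∑ i ∈ Icc 1 K, momentumWeight B K i • g i)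
        + (1 - B (K + 1)) • (v - g (K + 1)) := by
  rw [sum_Icc_succ_top (by omega), momentumWeight_self,
    sum_congr rfl fun i hi => by rw [momentumWeight_succ B (mem_Icc.mp hi).2, mul_smul],
    ← smul_sum, smul_sub, smul_sub]
  abel

variable (G : E → Z → E) (A B : ℕ → ℝ) (x1 : E) (gradf : E → E)

/-- `sgdmTrajectory G A B x1 K z = (x^{K+1}, m^K)`, the SGDM iterates driven by the noise
realisation `z`. -/
def sgdmTrajectory : ℕ → (ℕ → Z) → E × E
  | 0, _ => (x1, 0)
  | K + 1, z =>
    let p := sgdmTrajectory K z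
    let m := B (K + 1) • p.2 + (1 - B (K + 1)) • G p.1 (z (K + 1))
    (p.1 - A (K + 1) • m, m)

def shiftedMomentum (K : ℕ) (z : ℕ → Z) : E :=
  (sgdmTrajectory G A B x1 K z).2 -
    ∑ i ∈ Icc 1 K, momentumWeight B K i • gradf (sgdmTrajectory G A B x1 (i - 1) z).1

variable {G A B x1 gradf}

theorem sgdmTrajectory_congr {K : ℕ} {z z' : ℕ → Z} (h : ∀ i ≤ K, z i = z' i) :
    sgdmTrajectory G A B x1 K z = sgdmTrajectory G A B x1 K z' := by
  induction K with
  | zero => rfl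
  | succ K ih =>
    simp only [sgdmTrajectory, ih fun i hi => h i (by omega), h (K + 1) le_rfl]

theorem shiftedMomentum_congr {K : ℕ} {z z' : ℕ → Z} (h : ∀ i ≤ K, z i = z' i) :
    shiftedMomentum G A B x1 gradf K z = shiftedMomentum G A B x1 gradf K z' := by
  rw [shiftedMomentum, shiftedMomentum, sgdmTrajectory_congr h]
  congr 1
  refine sum_congr rfl fun i hi => ?_
  rw [sgdmTrajectory_congr fun j hj => h j (by have := (mem_Icc.mp hi).2; omega)]

theorem shiftedMomentum_zero (z : ℕ → Z) : shiftedMomentum G A B x1 gradf 0 z = 0 := by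
  simp [shiftedMomentum, sgdmTrajectory]

theorem shiftedMomentum_succ (K : ℕ) (z : ℕ → Z) :
    shiftedMomentum G A B x1 gradf (K + 1) z =
      B (K + 1) • shiftedMomentum G A B x1 gradf K z +
        (1 - B (K + 1)) • (G (sgdmTrajectory G A B x1 K z).1 (z (K + 1)) -
          gradf (sgdmTrajectory G A B x1 K z).1) :=
  momentum_sub_weighted_sum_succ B (fun i => gradf (sgdmTrajectory G A B x1 (i - 1) z).1) _ _ K

theorem sgdmTrajectory_eq {x m : ℕ → E} {z : ℕ → Z} (hx1 : x 1 = x1) (hm0 : m 0 = 0)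
    (hm : ∀ k, 1 ≤ k → m k = B k • m (k - 1) + (1 - B k) • G (x k) (z k))
    (hx : ∀ k, 1 ≤ k → x (k + 1) = x k - A k • m k) (K : ℕ) :
    sgdmTrajectory G A B x1 K z = (x (K + 1), m K) := by
  induction K with
  | zero => simp [sgdmTrajectory, hx1, hm0]
  | succ K ih =>
    have hmK : m (K + 1) = B (K + 1) • m K + (1 - B (K + 1)) • G (x (K + 1)) (z (K + 1)) :=
      hm (K + 1) (by omega)
    simp only [sgdmTrajectory, ih, ← hmK, ← hx (K + 1) (by omega)]

theorem shiftedMomentum_eq {x m : ℕ → E} {z : ℕ → Z} (hx1 : x 1 = x1) (hm0 : m 0 = 0)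
    (hm : ∀ k, 1 ≤ k → m k = B k • m (k - 1) + (1 - B k) • G (x k) (z k))
    (hx : ∀ k, 1 ≤ k → x (k + 1) = x k - A k • m k) (K : ℕ) :
    shiftedMomentum G A B x1 gradf K z =
      m K - ∑ i ∈ Icc 1 K, momentumWeight B K i • gradf (x i) := by
  rw [shiftedMomentum, sgdmTrajectory_eq hx1 hm0 hm hx]
  congr 1
  refine sum_congr rfl fun i hi => ?_
  rw [sgdmTrajectory_eq hx1 hm0 hm hx, Nat.sub_add_cancel (mem_Icc.mp hi).1]

end Trajectory

section Measurability

variable {E Z : Type*} [NormedAddCommGroup E] [NormedSpace ℝ E] [MeasurableSpace E]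
  [BorelSpace E] [SecondCountableTopology E] [MeasurableSpace Z]
  {G : E → Z → E} {A B : ℕ → ℝ} {x1 : E} {gradf : E → E}

theorem measurable_sgdmTrajectory (hG : Measurable (Function.uncurry G)) (K : ℕ) :
    Measurable (sgdmTrajectory G A B x1 K) := by
  induction K with
  | zero => exact measurable_const
  | succ K ih =>
    have hm : Measurable fun z : ℕ → Z => B (K + 1) • (sgdmTrajectory G A B x1 K z).2 +
        (1 - B (K + 1)) • G (sgdmTrajectory G A B x1 K z).1 (z (K + 1)) :=
      (ih.snd.const_smul _).add
        ((hG.comp (ih.fst.prodMk (measurable_pi_apply (K + 1)))).const_smul _)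
    exact (ih.fst.sub (hm.const_smul _)).prodMk hm

theorem measurable_shiftedMomentum (hG : Measurable (Function.uncurry G))
    (hgrad : Measurable gradf) (K : ℕ) :
    Measurable (shiftedMomentum G A B x1 gradf K) :=
  (measurable_sgdmTrajectory hG K).snd.sub <| Finset.measurable_sum _ fun i _ =>
    (hgrad.comp (measurable_sgdmTrajectory hG (i - 1)).fst).const_smul _

end Measurability

section Step

variable {E Z : Type*} [NormedAddCommGroup E] [InnerProductSpace ℝ E] [CompleteSpace E]
  [MeasurableSpace E] [BorelSpace E] [SecondCountableTopology E] [MeasurableSpace Z]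
  {G : E → Z → E} {A B : ℕ → ℝ} {x1 : E} {gradf : E → E}

theorem integral_norm_shiftedMomentum_succ_le {Ω : Type*} [MeasurableSpace Ω] {P : Measure Ω}
    [IsProbabilityMeasure P] {ζ : ℕ → Ω → Z} (hζ : ∀ k, Measurable (ζ k))
    (hindep : iIndepFun ζ P) (hG : Measurable (Function.uncurry G)) (hgrad : Measurable gradf)
    {σ : ℝ} (K : ℕ) (hmean : ∀ x, ∫ ω, G x (ζ (K + 1) ω) ∂P = gradf x)
    (hvar : ∀ x, ∫ ω, ‖G x (ζ (K + 1) ω) - gradf x‖ ^ 2 ∂P ≤ σ ^ 2) :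
    ∫ ω, ‖shiftedMomentum G A B x1 gradf (K + 1) (fun i => ζ i ω)‖ ^ 2 ∂P ≤
      B (K + 1) ^ 2 * ∫ ω, ‖shiftedMomentum G A B x1 gradf K (fun i => ζ i ω)‖ ^ 2 ∂P +
        (1 - B (K + 1)) ^ 2 * σ ^ 2 := by
  set c := 1 - B (K + 1)
  set xNext : (ℕ → Z) → E := fun z => (sgdmTrajectory G A B x1 K z).1
  have hxNext : Measurable xNext := (measurable_sgdmTrajectory hG K).fst
  -- the noise up to time `K`, frozen after `K`
  set U : Ω → ℕ → Z := fun ω i => ζ (min i K) ω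
  have hU : Measurable U := measurable_pi_lambda _ fun i => hζ _
  have hUV : IndepFun U (ζ (K + 1)) P := by
    have hsplit := hindep.indepFun_finset (Finset.range (K + 1)) {K + 1} (by simp) hζ
    exact hsplit.comp
      (measurable_pi_lambda (fun p i => p ⟨min i K, Finset.mem_range.mpr (by omega)⟩)
        fun i => measurable_pi_apply _)
      (measurable_pi_apply ⟨K + 1, Finset.mem_singleton_self _⟩)
  have hUζ (ω : Ω) : ∀ i ≤ K, ζ i ω = U ω i := fun i hi => by simp [U, min_eq_left hi]
  have hsucc (ω : Ω) : shiftedMomentum G A B x1 gradf (K + 1) (fun i => ζ i ω) =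
      B (K + 1) • shiftedMomentum G A B x1 gradf K (U ω) +
        c • (G (xNext (U ω)) (ζ (K + 1) ω) - gradf (xNext (U ω))) := by
    rw [shiftedMomentum_succ, shiftedMomentum_congr (hUζ ω), sgdmTrajectory_congr (hUζ ω)]
  have hnoise :
      StronglyMeasurable (Function.uncurry fun z v => c • (G (xNext z) v - gradf (xNext z))) :=
    (((hG.comp ((hxNext.comp measurable_fst).prodMk measurable_snd)).sub
      (hgrad.comp (hxNext.comp measurable_fst))).const_smul c).stronglyMeasurable
  simp_rw [hsucc, shiftedMomentum_congr (hUζ _)]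
  calc _ ≤ ∫ ω, ‖B (K + 1) • shiftedMomentum G A B x1 gradf K (U ω)‖ ^ 2 ∂P + c ^ 2 * σ ^ 2 :=
        integral_norm_add_sq_le_of_indepFun (U := U)
          (a := fun z => B (K + 1) • shiftedMomentum G A B x1 gradf K z)
          (e := fun z v => c • (G (xNext z) v - gradf (xNext z))) hU (hζ _) hUV
          ((measurable_shiftedMomentum hG hgrad K).const_smul _).stronglyMeasurable hnoise
          (by positivity)
          (fun z => by rw [integral_smul, integral_sub_eq_zero_of_integral_eq (hmean _), smul_zero])
          (fun z => by
            simp_rw [norm_smul, mul_pow, Real.norm_eq_abs, sq_abs]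
            rw [integral_const_mul]
            exact mul_le_mul_of_nonneg_left (hvar _) (sq_nonneg c))
    _ = _ := by
        simp_rw [norm_smul, mul_pow, Real.norm_eq_abs, sq_abs]
        rw [integral_const_mul]

end Step

theorem multistage_sgdm_shifted_momentum_variance_general
    {d : ℕ}
    {Ω : Type*} [MeasureSpace Ω] (hprob : IsProbabilityMeasure (ℙ : Measure Ω))
    {Z : Type*} [mZ : MeasurableSpace Z]
    (gradf : EuclideanSpace ℝ (Fin d) → EuclideanSpace ℝ (Fin d))
    (L : ℝ)
    (hsmooth : ∀ x y, ‖gradf x - gradf y‖ ≤ L * ‖x - y‖)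
    (σ : ℝ)
    (ζ : ℕ → Ω → Z) (hζmeas : ∀ k, Measurable (ζ k))
    (hindep : iIndepFun (m := fun _ => mZ) ζ ℙ)
    (G : EuclideanSpace ℝ (Fin d) → Z → EuclideanSpace ℝ (Fin d))
    (hGmeas : Measurable (Function.uncurry G))
    (hunbiased : ∀ x k, ∫ ω, G x (ζ k ω) ∂ℙ = gradf x)
    (hvar : ∀ x k, ∫ ω, ‖G x (ζ k ω) - gradf x‖ ^ 2 ∂ℙ ≤ σ ^ 2)
    (n : ℕ) (hn : 1 ≤ n)
    (αs βs : ℕ → ℝ) (T : ℕ → ℕ)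
    (hβs : ∀ l ∈ Finset.Icc 1 n, βs l ∈ Set.Ico (0 : ℝ) 1)
    (A B : ℕ → ℝ)
    (hstage : ∀ l ∈ Finset.Icc 1 n, ∀ k : ℕ,
      (∑ j ∈ Finset.Icc 1 (l - 1), T j) < k → k ≤ (∑ j ∈ Finset.Icc 1 l, T j) →
      A k = αs l ∧ B k = βs l)
    (x m : ℕ → Ω → EuclideanSpace ℝ (Fin d))
    (x1 : EuclideanSpace ℝ (Fin d)) (hx1 : ∀ ω, x 1 ω = x1)
    (hm0 : ∀ ω, m 0 ω = 0)
    (hm : ∀ k, 1 ≤ k → ∀ ω, m k ω = B k • m (k - 1) ω + (1 - B k) • G (x k ω) (ζ k ω))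
    (hx : ∀ k, 1 ≤ k → ∀ ω, x (k + 1) ω = x k ω - A k • m k ω)
    (hmono : ∀ i j : ℕ, 1 ≤ i → i ≤ j → j ≤ n → βs i ≤ βs j)
    (hβhalf : (1 : ℝ) / 2 ≤ βs 1)
    (hratio : (1 - βs 1) / βs 1 ≤ 12 * (1 - βs n) / Real.sqrt (βs n + βs n ^ 2)) :
    ∀ k : ℕ, 1 ≤ k → k ≤ ∑ j ∈ Finset.Icc 1 n, T j →
      (1 / (1 - B k)) *
          ∫ ω, ‖m (k - 1) ω - ∑ i ∈ Finset.Icc 1 (k - 1),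
            ((1 - B i) * ∏ j ∈ Finset.Icc (i + 1) (k - 1), B j) • gradf (x i ω)‖ ^ 2 ∂ℙ
        ≤ 24 * (βs 1 / Real.sqrt (βs n + βs n ^ 2)) * σ ^ 2 := by
  intro k hk hkN
  have hB : ∀ K, 1 ≤ K → K ≤ ∑ j ∈ Finset.Icc 1 n, T j → βs 1 ≤ B K ∧ B K ≤ βs n ∧ B K < 1 := by
    intro K hK hKN
    obtain ⟨l, hl, hlK, hKl⟩ := exists_stage_of_le_sum T hK hKN
    obtain ⟨hl1, hln⟩ := Finset.mem_Icc.mp hl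
    rw [(hstage l hl K hlK hKl).2]
    exact ⟨hmono 1 l le_rfl hl1 hln, hmono l n hl1 hln le_rfl, (hβs l hl).2⟩
  obtain ⟨hβ1k, hkβn, hk1⟩ := hB k hk hkN
  have hβn : βs n < 1 := (hβs n (Finset.mem_Icc.mpr ⟨hn, le_rfl⟩)).2
  have hgrad : Measurable gradf :=
    (LipschitzWith.of_dist_le' fun x y => by
      simpa [dist_eq_norm] using hsmooth x y).continuous.measurable
  have hvariance := le_one_sub_mul_of_le_sq_mul_add (N := ∑ j ∈ Finset.Icc 1 n, T j)
    (V := fun K => ∫ ω, ‖shiftedMomentum G A B x1 gradf K (fun i => ζ i ω)‖ ^ 2 ∂ℙ)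
    (by linarith) (hβ1k.trans hk1.le) (sq_nonneg σ) (by simp [shiftedMomentum_zero])
    (fun K hK => ⟨(hB (K + 1) (by omega) hK).1, (hB (K + 1) (by omega) hK).2.2⟩)
    (fun K _ => integral_norm_shiftedMomentum_succ_le hζmeas hindep hGmeas hgrad K
      (hunbiased · (K + 1)) (hvar · (K + 1)))
    (k - 1) (by omega)
  simp only [shiftedMomentum_eq (hx1 _) (hm0 _) (fun k hk => hm k hk _) (fun k hk => hx k hk _)]
    at hvariance
  exact one_div_one_sub_mul_le (by linarith) (hβ1k.trans hkβn) hβn hkβn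
    (Real.sqrt_pos.mpr (by nlinarith)) (sq_nonneg σ) hvariance hratio

/-- Variance bound for the shifted multistage SGDM momentum vector
`m^{k−1}`, normalized by the current momentum weight. -/
theorem multistage_sgdm_shifted_momentum_variance
    {d : ℕ} (hd : 1 ≤ d)
    {Ω : Type*} [MeasureSpace Ω] (hprob : IsProbabilityMeasure (ℙ : Measure Ω))
    {Z : Type*} [mZ : MeasurableSpace Z]
    (f : EuclideanSpace ℝ (Fin d) → ℝ)
    (gradf : EuclideanSpace ℝ (Fin d) → EuclideanSpace ℝ (Fin d))
    (hgrad : ∀ x, HasGradientAt f (gradf x) x)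
    (L : ℝ) (hL : 0 < L)
    (hsmooth : ∀ x y, ‖gradf x - gradf y‖ ≤ L * ‖x - y‖)
    (fstar : ℝ) (hfstar : IsGLB (Set.range f) fstar)
    (σ : ℝ) (hσ : 0 ≤ σ)
    (ζ : ℕ → Ω → Z) (hζmeas : ∀ k, Measurable (ζ k))
    (hindep : iIndepFun (m := fun _ => mZ) ζ ℙ)
    (G : EuclideanSpace ℝ (Fin d) → Z → EuclideanSpace ℝ (Fin d))
    (hGmeas : Measurable (Function.uncurry G))
    (hunbiased : ∀ x k, ∫ ω, G x (ζ k ω) ∂ℙ = gradf x)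
    (hvar : ∀ x k, ∫ ω, ‖G x (ζ k ω) - gradf x‖ ^ 2 ∂ℙ ≤ σ ^ 2)
    (n : ℕ) (hn : 1 ≤ n)
    (αs βs : ℕ → ℝ) (T : ℕ → ℕ)
    (hαs : ∀ l ∈ Finset.Icc 1 n, 0 < αs l)
    (hβs : ∀ l ∈ Finset.Icc 1 n, βs l ∈ Set.Ico (0 : ℝ) 1)
    (A B : ℕ → ℝ)
    (hstage : ∀ l ∈ Finset.Icc 1 n, ∀ k : ℕ,
      (∑ j ∈ Finset.Icc 1 (l - 1), T j) < k → k ≤ (∑ j ∈ Finset.Icc 1 l, T j) →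
      A k = αs l ∧ B k = βs l)
    (x m : ℕ → Ω → EuclideanSpace ℝ (Fin d))
    (x1 : EuclideanSpace ℝ (Fin d)) (hx1 : ∀ ω, x 1 ω = x1)
    (hm0 : ∀ ω, m 0 ω = 0)
    (hm : ∀ k, 1 ≤ k → ∀ ω, m k ω = B k • m (k - 1) ω + (1 - B k) • G (x k ω) (ζ k ω))
    (hx : ∀ k, 1 ≤ k → ∀ ω, x (k + 1) ω = x k ω - A k • m k ω)
    (hmono : ∀ i j : ℕ, 1 ≤ i → i ≤ j → j ≤ n → βs i ≤ βs j)
    (hβhalf : (1 : ℝ) / 2 ≤ βs 1)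
    (hThalf : ∀ i ∈ Finset.Icc 1 n, βs i ^ (2 * T i) ≤ (1 : ℝ) / 2)
    (hratio : (1 - βs 1) / βs 1 ≤ 12 * (1 - βs n) / Real.sqrt (βs n + βs n ^ 2)) :
    ∀ k : ℕ, 1 ≤ k → k ≤ ∑ j ∈ Finset.Icc 1 n, T j →
      (1 / (1 - B k)) *
          ∫ ω, ‖m (k - 1) ω - ∑ i ∈ Finset.Icc 1 (k - 1),
            ((1 - B i) * ∏ j ∈ Finset.Icc (i + 1) (k - 1), B j) • gradf (x i ω)‖ ^ 2 ∂ℙ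
        ≤ 24 * (βs 1 / Real.sqrt (βs n + βs n ^ 2)) * σ ^ 2 :=
  multistage_sgdm_shifted_momentum_variance_general hprob (mZ := mZ) gradf L hsmooth σ ζ hζmeas
    hindep G hGmeas hunbiased hvar n hn αs βs T hβs A B hstage x m x1 hx1 hm0 hm hx hmono hβhalf
    hratio
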